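/- Bounding implies Suslin Bounding for Π¹₁ sets: assume every function from ω₁ to ω₁ is bounded on a club by a canonical function for an ordinal below ω₂. Let S be a tree on ω × ω, let A = ω^ω \ p[S] (a Π¹₁ set), and let f : ω₁ → A. Then there is a tree T on ω × ω₁ with p[T] = A and a club C ⊆ ω₁ such that for all α ∈ C, f(α) ∈ p[T ↾ (ω × α)]. -/

import Mathlib

open ZFSet FirstOrder

namespace P746

/-! ## First-order language with membership and a wellordering predicate -/

/-- The language with two binary relation symbols: `∈` and a wellordering `<*`. -/
def L : FirstOrder.Language where
  Functions := fun _ => Empty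
  Relations := fun n => match n with
    | 2 => Fin 2
    | _ => Empty

open Classical in
/-- The `L`-structure on (the members of) a ZF-set `M`, interpreting the first relation
as membership and the second as a given relation `r`. -/
def mStruc (M : ZFSet) (r : ZFSet → ZFSet → Prop) : L.Structure M.toSet where
  funMap := fun f _ => f.elim
  RelMap := fun {n} => match n with
    | 0 => fun R _ => R.elim
    | 1 => fun R _ => R.elim
    | 2 => fun R v => if R = (0 : Fin 2) then ((v 0 : ZFSet) ∈ (v 1 : ZFSet)) else r (v 0) (v 1)
    | (_+3) => fun R _ => R.elim

/-- `X` is an elementary substructure of `(M, ∈, r)`: `X ⊆ M` and every first-order formula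
with parameters from `X` holds in `X` iff it holds in `M`. -/
def ElemSub (M : ZFSet) (r : ZFSet → ZFSet → Prop) (X : ZFSet) : Prop :=
  ∃ h : X ⊆ M,
    ∀ (n : ℕ) (φ : L.Formula (Fin n)) (v : Fin n → X.toSet),
      (letI := mStruc M r
       φ.Realize (fun i => (⟨(v i : ZFSet), h (v i).2⟩ : M.toSet))) ↔
      (letI := mStruc X r; φ.Realize v)

/-- `r` is a wellordering of the members of `S`. -/
def WOn (S : ZFSet) (r : ZFSet → ZFSet → Prop) : Prop :=
  IsWellOrder S.toSet (Subrel r S.toSet)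

/-! ## Basic set-theoretic notions inside `ZFSet` -/

/-- `x` is a (von Neumann) ordinal: a transitive set of transitive sets. -/
def IsOrd (x : ZFSet) : Prop :=
  x.IsTransitive ∧ ∀ y ∈ x.toSet, ZFSet.IsTransitive y

/-- `w` is the first uncountable ordinal `ω₁`. -/
def IsOmega1 (w : ZFSet) : Prop :=
  IsOrd w ∧ ¬ w.toSet.Countable ∧ ∀ y ∈ w.toSet, y.toSet.Countable

/-- The set `[x]^{<ω}` of finite subsets of `x`. -/
noncomputable def finPow (x : ZFSet) : ZFSet :=
  ZFSet.sep (fun a => a.toSet.Finite) x.powerset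

/-- The set `[x]^n` of subsets of `x` of size `n`. -/
noncomputable def finPowCard (x : ZFSet) (n : ℕ) : ZFSet :=
  ZFSet.sep (fun a => a.toSet.Finite ∧ a.toSet.ncard = n) x.powerset

/-- `D^X_η`: the set of finite `a ⊆ η` such that `f(a) ∈ X` for every
`f : [η]^{|a|} → ω₁` belonging to `X` (`w` stands for `ω₁`). -/
def Dset (w X η : ZFSet) : Set ZFSet :=
  {a | a ∈ finPow η ∧ ∀ f ∈ X.toSet, ZFSet.IsFunc (finPowCard η a.toSet.ncard) w f →
    ∀ v : ZFSet, ZFSet.pair a v ∈ f → v ∈ X}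

/-- The Skolem hull of `X ∪ z` in `M` (with functions on `[η]^{<ω}`):
`X` together with all values `f(a)` for `f : [η]^{<ω} → M` in `X` and finite `a ⊆ z`. -/
def SkHull (M η X z : ZFSet) : Set ZFSet :=
  X.toSet ∪ {y | ∃ f ∈ X.toSet, ZFSet.IsFunc (finPow η) M f ∧
    ∃ a : ZFSet, a ∈ finPow η ∧ a ⊆ z ∧ ZFSet.pair a y ∈ f}

/-- `x` is hereditarily of cardinality less than `κ`. -/
def HerLt (κ : Cardinal) (x : ZFSet) : Prop :=
  ZFSet.mem_wf.fix (C := fun _ => Prop)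
    (fun y ih => Cardinal.mk y.toSet < κ ∧ ∀ z, ∀ h : z ∈ y, ih z h) x

/-- `H` is the collection `H(κ)` of sets hereditarily of cardinality `< κ`. -/
def IsHCard (κ : Cardinal) (H : ZFSet) : Prop :=
  ∀ x : ZFSet, x ∈ H ↔ HerLt κ x

/-! ## Clubs, stationarity and canonical functions on `ω₁` -/

noncomputable def omega1 : Ordinal.{0} := (Cardinal.aleph 1).ord
noncomputable def omega2 : Ordinal.{0} := (Cardinal.aleph 2).ord

/-- `C` is a club (closed unbounded) subset of `ω₁`. -/
def IsClub (C : Set Ordinal.{0}) : Prop :=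
  C ⊆ Set.Iio omega1 ∧
  (∀ o, o < omega1 → Order.IsSuccLimit o → (∀ b, b < o → ∃ c ∈ C, b ≤ c ∧ c < o) → o ∈ C) ∧
  (∀ b, b < omega1 → ∃ c ∈ C, b < c ∧ c < omega1)

/-- `S` is a stationary subset of `ω₁`. -/
def IsStat (S : Set Ordinal.{0}) : Prop :=
  ∀ C, IsClub C → (S ∩ C).Nonempty

/-- `f ≤ g` on a club. -/
def BddOnClub (f g : Ordinal.{0} → Ordinal.{0}) : Prop :=
  ∃ C, IsClub C ∧ ∀ α ∈ C, f α ≤ g α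

/-- `f < g` on a club. -/
def LtOnClub (f g : Ordinal.{0} → Ordinal.{0}) : Prop :=
  ∃ C, IsClub C ∧ ∀ α ∈ C, f α < g α

/-- `f` is a canonical function for `γ`: it is above every canonical function for every `β < γ`
(mod clubs), and minimally so.  (This is the standard recursive characterization of the
statement that the empty condition in `P(ω₁)/NS_{ω₁}` forces `j(f)(ω₁^V) = γ`.) -/
def Canonical : Ordinal.{0} → (Ordinal.{0} → Ordinal.{0}) → Prop :=
  Ordinal.lt_wf.fix (C := fun _ => (Ordinal.{0} → Ordinal.{0}) → Prop)
    (fun γ ih f =>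
      (∀ β, ∀ hβ : β < γ, ∀ g, ih β hβ g → LtOnClub g f) ∧
      ∀ h : Ordinal.{0} → Ordinal.{0},
        (∀ β, ∀ hβ : β < γ, ∀ g, ih β hβ g → LtOnClub g h) → BddOnClub f h)

/-- Every `f : ω₁ → ω₁` is bounded on a club by a canonical function for some `γ < ω₂`. -/
def Bounding : Prop :=
  ∀ f : Ordinal.{0} → Ordinal.{0}, (∀ α, α < omega1 → f α < omega1) →
    ∃ γ, γ < omega2 ∧ ∃ g, Canonical γ g ∧ BddOnClub f g

/-- `o` is the order type of the set of ordinals `s`: there is a strictly increasing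
enumeration of `s` indexed by the ordinals below `o`. -/
def IsOtypOf (o : Ordinal.{0}) (s : Set Ordinal.{0}) : Prop :=
  ∃ e : Ordinal.{0} → Ordinal.{0},
    (∀ i j, i < j → j < o → e i < e j) ∧
    (∀ i, i < o → e i ∈ s) ∧ ∀ x ∈ s, ∃ i, i < o ∧ e i = x

/-! ## Trees on `ω × ω` and `ω × Ord` (as sets of pairs of lists) -/

def IsTreeN (S : Set (List ℕ × List ℕ)) : Prop :=
  ∀ p ∈ S, p.1.length = p.2.length ∧ ∀ n : ℕ, (p.1.take n, p.2.take n) ∈ S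

def IsTreeO (T : Set (List ℕ × List Ordinal.{0})) : Prop :=
  ∀ p ∈ T, p.1.length = p.2.length ∧ ∀ n : ℕ, (p.1.take n, p.2.take n) ∈ T

/-- Projection of a tree on `ω × ω`. -/
def projN (S : Set (List ℕ × List ℕ)) : Set (ℕ → ℕ) :=
  {x | ∃ y : ℕ → ℕ, ∀ n : ℕ,
    (List.ofFn (fun i : Fin n => x i), List.ofFn (fun i : Fin n => y i)) ∈ S}

/-- Projection of a tree on `ω × Ord`. -/
def projO (T : Set (List ℕ × List Ordinal.{0})) : Set (ℕ → ℕ) :=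
  {x | ∃ y : ℕ → Ordinal.{0}, ∀ n : ℕ,
    (List.ofFn (fun i : Fin n => x i), List.ofFn (fun i : Fin n => y i)) ∈ T}

/-- Projection of the restricted tree `T ↾ (ω × α)`. -/
def projOBelow (T : Set (List ℕ × List Ordinal.{0})) (α : Ordinal.{0}) : Set (ℕ → ℕ) :=
  {x | ∃ y : ℕ → Ordinal.{0}, (∀ i, y i < α) ∧ ∀ n : ℕ,
    (List.ofFn (fun i : Fin n => x i), List.ofFn (fun i : Fin n => y i)) ∈ T}

/-! ## Names, evaluation, and generic extensions -/

open Classical in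
/-- Evaluation of a `P`-name `τ` by a filter `G`:
`val G τ = { val G σ : ∃ p ∈ G, (σ, p) ∈ τ }`, by recursion on rank. -/
noncomputable def val (G : ZFSet) : ZFSet → ZFSet :=
  WellFounded.fix (InvImage.wf ZFSet.rank Ordinal.lt_wf)
    (fun τ ih =>
      ZFSet.sUnion <| ZFSet.sep
        (fun y => ∃ z ∈ τ.toSet,
          if h : ∃ σ, ZFSet.rank σ < ZFSet.rank τ ∧ ∃ p ∈ G.toSet, z = ZFSet.pair σ p
          then y = {ih h.choose h.choose_spec.1}
          else y = ∅)
        (ZFSet.powerset (ZFSet.sUnion (ZFSet.sUnion (ZFSet.sUnion τ)))))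

/-- The universe is a generic extension `V[G]` of the transitive class `V` by the
partial order `(P, ≤)` (with `le` the set of pairs `(p,q)` with `p ≤ q`), `G ⊆ P`
a filter meeting every dense subset of `P` lying in `V`, and every set being the
value of a `P`-name in `V`. -/
def IsGenericExt (V : Set ZFSet) (P le G : ZFSet) : Prop :=
  (∀ x ∈ V, ∀ y, y ∈ x → y ∈ V) ∧ P ∈ V ∧ le ∈ V ∧
  (∀ p, p ∈ P → ZFSet.pair p p ∈ le) ∧
  (∀ p q z, ZFSet.pair p q ∈ le → ZFSet.pair q z ∈ le → ZFSet.pair p z ∈ le) ∧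
  (∀ p q, ZFSet.pair p q ∈ le → p ∈ P ∧ q ∈ P) ∧
  G ⊆ P ∧ G ≠ ∅ ∧
  (∀ p q, p ∈ G → q ∈ G → ∃ r, r ∈ G ∧ ZFSet.pair r p ∈ le ∧ ZFSet.pair r q ∈ le) ∧
  (∀ p q, p ∈ G → q ∈ P → ZFSet.pair p q ∈ le → q ∈ G) ∧
  (∀ D, D ∈ V → D ⊆ P → (∀ p, p ∈ P → ∃ q, q ∈ D ∧ ZFSet.pair q p ∈ le) →
    ∃ q, q ∈ G ∧ q ∈ D) ∧
  (∀ x : ZFSet, ∃ τ, τ ∈ V ∧ x = val G τ)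

/-- In the generic extension, the forcing added no new `ω`-sequences of ordinals;
i.e. `P` is `(ω, ∞)`-distributive. -/
def Distributive (V : Set ZFSet) : Prop :=
  ∀ f o : ZFSet, (o.IsTransitive ∧ ∀ y ∈ o.toSet, ZFSet.IsTransitive y) →
    ZFSet.IsFunc ZFSet.omega o f → f ∈ V

/-! ## Ultrafilters and completeness -/

/-- `U` is an ultrafilter on the set `S`. -/
def IsUltraOn (S U : ZFSet) : Prop :=
  U ⊆ S.powerset ∧ S ∈ U ∧ (∅ : ZFSet) ∉ U ∧
  (∀ A B, A ∈ U → A ⊆ B → B ⊆ S → B ∈ U) ∧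
  (∀ A B, A ∈ U → B ∈ U → A ∩ B ∈ U) ∧
  (∀ A, A ⊆ S → (A ∈ U ∨ ZFSet.sep (fun x => x ∉ A) S ∈ U))

/-- `U` is `γ`-complete with respect to families of members of `U` lying in `W`. -/
def CompleteOn (W : Set ZFSet) (γ : Cardinal.{1}) (S U : ZFSet) : Prop :=
  ∀ F, F ∈ W → F ≠ ∅ → F ⊆ U → Cardinal.mk F.toSet < γ →
    ZFSet.sep (fun x => ∀ A ∈ F.toSet, x ∈ A) S ∈ U

/-! ## Internal finite sequences, trees and homogeneity -/

/-- The set `κ^{<ω}` of finite sequences from `κ` (functions `n → κ`, `n < ω`). -/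
noncomputable def seqs (κ : ZFSet) : ZFSet :=
  ZFSet.sep (fun f => ∃ n, n ∈ ZFSet.omega ∧ ZFSet.IsFunc n κ f)
    (((κ ∪ ZFSet.omega).powerset.powerset).powerset)

/-- The set of functions `a → b` as a ZF-set. -/
noncomputable def funsZ (a b : ZFSet) : ZFSet :=
  ZFSet.sep (fun f => ZFSet.IsFunc a b f) (((a ∪ b).powerset.powerset).powerset)

/-- Restriction of a (set-)function `f` to `m`. -/
noncomputable def restr (f m : ZFSet) : ZFSet :=
  ZFSet.sep (fun p => ∃ i v, i ∈ m ∧ p = ZFSet.pair i v) f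

/-- `T` is a tree on `ω × κ`: a set of pairs of finite sequences of equal length,
closed under restriction. -/
def IsTreeZ (κ T : ZFSet) : Prop :=
  ∀ z, z ∈ T → ∃ n s t, n ∈ ZFSet.omega ∧ ZFSet.IsFunc n ZFSet.omega s ∧
    ZFSet.IsFunc n κ t ∧ z = ZFSet.pair s t ∧
    ∀ m, m ∈ n → ZFSet.pair (restr s m) (restr t m) ∈ T

/-- `x ∈ p[T]`, computed in `W`: there is a branch witness `y ∈ W`. -/
def inProjZ (W : Set ZFSet) (κ T x : ZFSet) : Prop :=
  ∃ y, y ∈ W ∧ ZFSet.IsFunc ZFSet.omega κ y ∧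
    ∀ n, n ∈ ZFSet.omega → ZFSet.pair (restr x n) (restr y n) ∈ T

/-- `x ∈ p[T ↾ (ω × A)]` where the branch takes values satisfying `Q`. -/
def inProjVal (κ T x : ZFSet) (Q : ZFSet → Prop) : Prop :=
  ∃ y, ZFSet.IsFunc ZFSet.omega κ y ∧ (∀ i v, ZFSet.pair i v ∈ y → Q v) ∧
    ∀ n, n ∈ ZFSet.omega → ZFSet.pair (restr x n) (restr y n) ∈ T

/-- The tower `⟨π(x ↾ k) : k < ω⟩` is countably complete, relativized to `W`. -/
def CCTower (W : Set ZFSet) (κ π x : ZFSet) : Prop :=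
  ∀ Af, Af ∈ W → ZFSet.IsFunc ZFSet.omega ((seqs κ).powerset) Af →
    (∀ n U a, n ∈ ZFSet.omega → ZFSet.pair (restr x n) U ∈ π →
      ZFSet.pair n a ∈ Af → a ∈ U) →
    ∃ y, y ∈ W ∧ ZFSet.IsFunc ZFSet.omega κ y ∧
      ∀ n a, n ∈ ZFSet.omega → ZFSet.pair n a ∈ Af → restr y n ∈ a

/-- `(T, π)` is a `γ`-homogeneous tree system on `ω × κ`, relativized to the class `W`. -/
def HomSys (W : Set ZFSet) (γ : Cardinal.{1}) (κ T π : ZFSet) : Prop :=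
  IsTreeZ κ T ∧
  (∀ z, z ∈ π → ∃ n s U, n ∈ ZFSet.omega ∧ ZFSet.IsFunc n ZFSet.omega s ∧
    z = ZFSet.pair s U ∧ IsUltraOn (funsZ n κ) U ∧ CompleteOn W γ (funsZ n κ) U ∧
    ZFSet.sep (fun t => ZFSet.pair s t ∈ T) (funsZ n κ) ∈ U) ∧
  (∀ s U U', ZFSet.pair s U ∈ π → ZFSet.pair s U' ∈ π → U = U') ∧
  (∀ x, x ∈ W → ZFSet.IsFunc ZFSet.omega ZFSet.omega x →
    (inProjZ W κ T x ↔
      ((∀ n, n ∈ ZFSet.omega → ∃ U, ZFSet.pair (restr x n) U ∈ π) ∧ CCTower W κ π x)))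

/-- `A` is a `γ`-homogeneously Suslin set of reals, in the sense of the class `W`. -/
def HomSuslinIn (W : Set ZFSet) (γ : Cardinal.{1}) (A : ZFSet) : Prop :=
  A ⊆ funsZ ZFSet.omega ZFSet.omega ∧
  ∃ κ T π, κ ∈ W ∧ T ∈ W ∧ π ∈ W ∧
    (κ.IsTransitive ∧ ∀ y ∈ κ.toSet, ZFSet.IsTransitive y) ∧
    HomSys W γ κ T π ∧
    ∀ x, ZFSet.IsFunc ZFSet.omega ZFSet.omega x → (x ∈ A ↔ inProjZ W κ T x)


/-! ## Additional notions -/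

/-- `γ` is a regular (limit) cardinal, as a ZF-set ordinal: the range of any function
from a smaller ordinal into `γ` is bounded. -/
def IsRegOrd (γ : ZFSet) : Prop :=
  IsOrd γ ∧ (∀ o ∈ γ.toSet, ∃ o' ∈ γ.toSet, o ∈ o') ∧
  ∀ b f, b ∈ γ → ZFSet.IsFunc b γ f → ∃ o ∈ γ.toSet, ∀ x v, ZFSet.pair x v ∈ f → v ∈ o

/-- `Y` is a minimal `(η, λ)`-extension of `X` (inside the model `M` with wellordering `r`):
`Y ≺ M`, `Y ∩ η = X ∩ η`, and `Y` is the Skolem hull of `X ∪ A` for some `A ⊆ λ`. -/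
def IsMinExt (M : ZFSet) (r : ZFSet → ZFSet → Prop) (η lam X Y : ZFSet) : Prop :=
  ElemSub M r Y ∧ Y ∩ η = X ∩ η ∧ ∃ A : ZFSet, A ⊆ lam ∧ Y.toSet = SkHull M lam X A

/-- `U` is a normal measure on the (measurable) cardinal `λ`. -/
def IsNormalMeasure (lam U : ZFSet) : Prop :=
  IsOrd lam ∧ IsUltraOn lam U ∧
  CompleteOn Set.univ (Cardinal.mk lam.toSet) lam U ∧
  (∀ x, x ∈ lam → ({x} : ZFSet) ∉ U) ∧
  ∀ f A, A ∈ U → ZFSet.IsFunc lam lam f →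
    (∀ x v, x ∈ A → ZFSet.pair x v ∈ f → (v ∈ x ∨ x = ∅)) →
    ∃ B c, B ∈ U ∧ ∀ x, x ∈ B → ZFSet.pair x c ∈ f

/-- `g` is the `ξ`-th ordinal of `M` (counting from `0`): the ordinals of `M` below `g`
have order type `ξ`. -/
def NthOrdOf (M : ZFSet) (ξ : Ordinal.{0}) (g : ZFSet) : Prop :=
  IsOrd g ∧ g ∈ M ∧
  IsOtypOf ξ (ZFSet.rank '' {x : ZFSet | x ∈ M.toSet ∧ IsOrd x ∧ x ∈ g})

/-- The relation `≤_o` on a tree `T` on `ω × ω₁`: one sequence extends the other, and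
the first coordinate of the last element of the longer one codes that the length of the
first is below the length of the second in the coded ordering.  (`decode k m n` means:
the value `k` codes `m` before `n`.) -/
def leO (T : Set (List ℕ × List Ordinal.{0})) (decode : ℕ → ℕ → ℕ → Prop)
    (p q : List ℕ × List Ordinal.{0}) : Prop :=
  p ∈ T ∧ q ∈ T ∧
  ((p.1 <+: q.1 ∧ p.2 <+: q.2 ∧ p.1.length < q.1.length ∧
      decode (q.1.getD (q.1.length - 1) 0) p.1.length q.1.length) ∨
   (q.1 <+: p.1 ∧ q.2 <+: p.2 ∧ q.1.length < p.1.length ∧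
      decode (p.1.getD (p.1.length - 1) 0) p.1.length q.1.length))

/-- The binary relation on `ω` coded by `x : ω → ω`:  comparisons of `n` with smaller
numbers are decided by `x (n - 1)`. -/
def codedRel (decode : ℕ → ℕ → ℕ → Prop) (x : ℕ → ℕ) (m n : ℕ) : Prop :=
  (m < n ∧ decode (x (n - 1)) m n) ∨ (n < m ∧ decode (x (m - 1)) m n)


/-! For `x ∉ p[S]` the section `S_x` is wellfounded under proper extension, of countable
height. Fix `δ < ω₂` and a map `e` of `ω₁` onto `δ`. A branch of `T` above `x` labels the nodes
of `S_x` by countable ordinals whose `e`-images decrease along extensions: it is a rank function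
of `S_x` into `δ`, read through `e`. Hence `p[T] = ω^ω \ p[S]` once `δ ≥ ω₁`, and
`x ∈ p[T ↾ (ω × α)]` as soon as the height of `S_x` is at most the order type of `e[α]`.
These order types increase strictly in `δ` modulo clubs, so by induction on `γ` they dominate
on a club every canonical function for any `γ ≤ δ`. Bounding, applied to
`α ↦ height of S_{f(α)}`, provides such a `γ` and the club. -/

open Ordinal Set

theorem isSuccLimit_omega1 : Order.IsSuccLimit omega1 :=
  Cardinal.isSuccLimit_ord (Cardinal.aleph0_le_aleph 1)

theorem omega1_pos : 0 < omega1 := isSuccLimit_omega1.bot_lt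

theorem omega1_lt_omega2 : omega1 < omega2 :=
  Cardinal.ord_lt_ord.2 (Cardinal.aleph_lt_aleph.2 one_lt_two)

theorem iSup_lt_omega1 {ι : Type*} [Countable ι] {f : ι → Ordinal.{0}}
    (hf : ∀ i, f i < omega1) : ⨆ i, f i < omega1 := by
  rw [omega1, Cardinal.ord_aleph] at hf ⊢
  exact Ordinal.iSup_lt_omega_one hf

theorem countable_Iio_of_lt_omega1 {w : Ordinal.{0}} (hw : w < omega1) :
    Countable (Iio w) := by
  rw [← Cardinal.mk_le_aleph0_iff, Cardinal.mk_Iio_ordinal, Cardinal.lift_le_aleph0]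
  exact Cardinal.lt_aleph_one_iff.1 (Cardinal.lt_ord.1 hw)

theorem isClub_Ioo {b : Ordinal.{0}} (hb : b < omega1) : IsClub (Ioo b omega1) := by
  refine ⟨fun _ h => h.2, fun α hα hlim hcof => ?_, fun c _ => ?_⟩
  · obtain ⟨d, hd, -, hdα⟩ := hcof 0 hlim.bot_lt
    exact ⟨hd.1.trans hdα, hα⟩
  · have h := isSuccLimit_omega1.succ_lt (max_lt hb ‹c < omega1›)
    exact ⟨_, ⟨(le_max_left b c).trans_lt (Order.lt_succ _), h⟩,
      (le_max_right b c).trans_lt (Order.lt_succ _), h⟩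

def closurePoints (u : Ordinal.{0} → Ordinal.{0}) : Set Ordinal.{0} :=
  {α | α < omega1 ∧ ∀ ξ < α, u ξ < α}

theorem isClub_closurePoints {u : Ordinal.{0} → Ordinal.{0}}
    (hu : ∀ ξ < omega1, u ξ < omega1) : IsClub (closurePoints u) := by
  refine ⟨fun _ h => h.1, fun α hα hlim hcof => ⟨hα, fun ξ hξ => ?_⟩, fun b hb => ?_⟩
  · obtain ⟨c, hc, hξc, hcα⟩ := hcof (Order.succ ξ) (hlim.succ_lt hξ)
    exact (hc.2 ξ ((Order.lt_succ ξ).trans_le hξc)).trans hcα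
  · -- the supremum of the iterates of `s` from `b` is a closure point of `u` above `b`
    let s : Ordinal.{0} → Ordinal.{0} := fun w =>
      max (Order.succ w) (⨆ ξ : Iio w, Order.succ (u ξ))
    have hs : ∀ w < omega1, s w < omega1 := fun w hw =>
      max_lt (isSuccLimit_omega1.succ_lt hw) <| by
        have := countable_Iio_of_lt_omega1 hw
        exact iSup_lt_omega1 fun ξ => isSuccLimit_omega1.succ_lt (hu ξ (ξ.2.trans hw))
    have hv : ∀ n, s^[n] b < omega1 := fun n => by
      induction n with
      | zero => exact hb
      | succ n ih => rw [Function.iterate_succ_apply']; exact hs _ ih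
    have hlt : ∀ n, s^[n] b < ⨆ n, s^[n] b := fun n =>
      calc s^[n] b < s (s^[n] b) := (Order.lt_succ _).trans_le (le_max_left _ _)
        _ = s^[n + 1] b := (Function.iterate_succ_apply' s n b).symm
        _ ≤ ⨆ n, s^[n] b := Ordinal.le_iSup (fun n => s^[n] b) (n + 1)
    refine ⟨_, ⟨iSup_lt_omega1 hv, fun ξ hξ => ?_⟩, hlt 0, iSup_lt_omega1 hv⟩
    obtain ⟨n, hn⟩ := Ordinal.lt_iSup_iff.1 hξ
    calc u ξ < Order.succ (u ξ) := Order.lt_succ _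
      _ ≤ ⨆ ζ : Iio (s^[n] b), Order.succ (u ζ) :=
        Ordinal.le_iSup (fun ζ : Iio (s^[n] b) => Order.succ (u ζ)) ⟨ξ, hn⟩
      _ ≤ s (s^[n] b) := le_max_right _ _
      _ < ⨆ n, s^[n] b := (Function.iterate_succ_apply' s n b) ▸ hlt (n + 1)

theorem IsClub.inter {C D : Set Ordinal.{0}} (hC : IsClub C) (hD : IsClub D) :
    IsClub (C ∩ D) := by
  refine ⟨fun _ h => hC.1 h.1, fun α hα hlim hcof => ⟨hC.2.1 α hα hlim fun b hb => ?_,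
    hD.2.1 α hα hlim fun b hb => ?_⟩, fun b hb => ?_⟩
  · exact (hcof b hb).imp fun c hc => ⟨hc.1.1, hc.2⟩
  · exact (hcof b hb).imp fun c hc => ⟨hc.1.2, hc.2⟩
  · -- a nonzero point closed under "next point of `C`" and "next point of `D`" lies in `C ∩ D`
    choose! nC hnC using hC.2.2
    choose! nD hnD using hD.2.2
    have hclub := isClub_closurePoints (u := fun ξ => max (nC ξ) (nD ξ))
      fun ξ hξ => max_lt (hnC ξ hξ).2.2 (hnD ξ hξ).2.2
    obtain ⟨α, ⟨hα, hclosed⟩, hbα, -⟩ := hclub.2.2 b hb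
    have hnCα : ∀ ξ < α, nC ξ < α := fun ξ hξ => (le_max_left _ _).trans_lt (hclosed ξ hξ)
    have hnDα : ∀ ξ < α, nD ξ < α := fun ξ hξ => (le_max_right _ _).trans_lt (hclosed ξ hξ)
    have hlim : Order.IsSuccLimit α := Ordinal.isSuccLimit_iff.2 ⟨hbα.ne_bot,
      Order.isSuccPrelimit_iff_succ_lt.2 fun ξ hξ =>
        (Order.succ_le_of_lt (hnC ξ (hξ.trans hα)).2.1).trans_lt (hnCα ξ hξ)⟩
    exact ⟨α, ⟨hC.2.1 α hα hlim fun ξ hξ => ⟨nC ξ, (hnC ξ (hξ.trans hα)).1,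
        (hnC ξ (hξ.trans hα)).2.1.le, hnCα ξ hξ⟩,
      hD.2.1 α hα hlim fun ξ hξ => ⟨nD ξ, (hnD ξ (hξ.trans hα)).1,
        (hnD ξ (hξ.trans hα)).2.1.le, hnDα ξ hξ⟩⟩, hbα, hα⟩

theorem BddOnClub.trans {f g h : Ordinal.{0} → Ordinal.{0}} (hfg : BddOnClub f g)
    (hgh : BddOnClub g h) : BddOnClub f h :=
  let ⟨C, hC, hfg⟩ := hfg
  let ⟨D, hD, hgh⟩ := hgh
  ⟨C ∩ D, hC.inter hD, fun α hα => (hfg α hα.1).trans (hgh α hα.2)⟩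

theorem BddOnClub.trans_ltOnClub {f g h : Ordinal.{0} → Ordinal.{0}} (hfg : BddOnClub f g)
    (hgh : LtOnClub g h) : LtOnClub f h :=
  let ⟨C, hC, hfg⟩ := hfg
  let ⟨D, hD, hgh⟩ := hgh
  ⟨C ∩ D, hC.inter hD, fun α hα => (hfg α hα.1).trans_lt (hgh α hα.2)⟩

open Classical in
/-- Junk value `0` for unbounded sets. -/
noncomputable def otp (s : Set Ordinal.{0}) : Ordinal.{0} :=
  if h : typeLT s ∈ range Ordinal.lift.{1} then h.choose else 0

theorem lift_otp {s : Set Ordinal.{0}} (hs : BddAbove s) :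
    Ordinal.lift.{1} (otp s) = typeLT s := by
  obtain ⟨b, hb⟩ := hs
  have hle : typeLT s ≤ Ordinal.lift.{1} (Order.succ b) :=
    (type_mono fun x hx => Order.lt_succ_of_le (hb hx)).trans_eq (type_lt_Iio _)
  have h := Ordinal.mem_range_lift_of_le hle
  rw [otp, dif_pos h]
  exact h.choose_spec

theorem otp_Iio (b : Ordinal.{0}) : otp (Iio b) = b :=
  Ordinal.lift_inj.1 (by rw [lift_otp bddAbove_Iio, type_lt_Iio])

theorem otp_lt_otp {s t : Set Ordinal.{0}} {b : Ordinal.{0}} (hst : s ⊆ t) (hb : b ∈ t)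
    (hs : ∀ x ∈ s, x < b) (ht : BddAbove t) : otp s < otp t := by
  rw [← Ordinal.lift_lt.{1}, lift_otp (ht.mono hst), lift_otp ht]
  calc typeLT s ≤ typeLT (Iio (⟨b, hb⟩ : t)) := type_le_iff'.2
        ⟨(OrderEmbedding.ofStrictMono (fun x : s => (⟨⟨x, hst x.2⟩, hs x x.2⟩ : Iio _))
          fun _ _ h => h).ltEmbedding⟩
    _ < typeLT t := typein_lt_type _ _

theorem nonempty_orderEmbedding_of_le_otp {β : Ordinal.{0}} {s : Set Ordinal.{0}}
    (hs : BddAbove s) (h : β ≤ otp s) : Nonempty (Iio β ↪o s) := by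
  rw [← Ordinal.lift_le.{1}, lift_otp hs, ← type_lt_Iio, type_le_iff'] at h
  obtain ⟨f⟩ := h
  exact ⟨RelEmbedding.orderEmbeddingOfLTEmbedding f⟩

theorem exists_image_Iio_omega1_eq {δ : Ordinal.{0}} (h0 : 0 < δ) (h2 : δ < omega2) :
    ∃ e : Ordinal.{0} → Ordinal.{0}, e '' Iio omega1 = Iio δ := by
  have hcard : δ.card ≤ Cardinal.aleph 1 := by
    have h := Cardinal.lt_ord.1 h2
    rwa [show (2 : Ordinal) = 1 + 1 by norm_num, ← Cardinal.succ_aleph, Order.lt_succ_iff] at h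
  have hmk : Cardinal.mk (Iio δ) ≤ Cardinal.mk (Iio omega1) := by
    rw [Cardinal.mk_Iio_ordinal, Cardinal.mk_Iio_ordinal, Cardinal.lift_le, omega1,
      Cardinal.card_ord]
    exact hcard
  obtain ⟨ι⟩ := (Cardinal.le_def _ _).1 hmk
  have : Nonempty (Iio δ) := ⟨⟨0, h0⟩⟩
  refine ⟨fun ξ => if h : ξ < omega1 then
    ((Function.invFun ι (⟨ξ, h⟩ : Iio omega1) : Iio δ) : Ordinal) else 0, ?_⟩
  refine Subset.antisymm ?_ fun ζ hζ => ⟨ι ⟨ζ, hζ⟩, (ι ⟨ζ, hζ⟩).2, ?_⟩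
  · rintro _ ⟨ξ, hξ, rfl⟩
    simp only [dif_pos (show ξ < omega1 from hξ)]
    exact (Function.invFun ι _).2
  · simp only [Function.leftInverse_invFun ι.injective _]
    exact dif_pos (ι ⟨ζ, hζ⟩).2

open Classical in
noncomputable def collapse (δ : Ordinal.{0}) : Ordinal.{0} → Ordinal.{0} :=
  if h : ∃ e : Ordinal.{0} → Ordinal.{0}, e '' Iio omega1 = Iio δ then h.choose else id

theorem collapse_image_Iio_omega1 {δ : Ordinal.{0}} (h0 : 0 < δ) (h2 : δ < omega2) :
    collapse δ '' Iio omega1 = Iio δ := by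
  have h := exists_image_Iio_omega1_eq h0 h2
  rw [collapse, dif_pos h]
  exact h.choose_spec

/-- Intersecting with `Iio δ` makes `canonFn 0 = 0`, although `collapse 0` is junk. -/
noncomputable def canonFn (δ α : Ordinal.{0}) : Ordinal.{0} :=
  otp (Iio δ ∩ collapse δ '' Iio α)

theorem canonFn_omega1 {δ : Ordinal.{0}} (h0 : 0 < δ) (h2 : δ < omega2) :
    canonFn δ omega1 = δ := by
  rw [canonFn, collapse_image_Iio_omega1 h0 h2, inter_self, otp_Iio]

theorem canonFn_lt_canonFn {β δ : Ordinal.{0}} (hβδ : β < δ) (hδ : δ < omega2) :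
    LtOnClub (canonFn β) (canonFn δ) := by
  have himage := collapse_image_Iio_omega1 (bot_le.trans_lt hβδ) hδ
  have hpre : ∀ ξ, ∃ η < omega1, collapse β ξ < β → collapse δ η = collapse β ξ := by
    intro ξ
    by_cases hξ : collapse β ξ < β
    · obtain ⟨η, hη, h⟩ : collapse β ξ ∈ collapse δ '' Iio omega1 :=
        himage ▸ hξ.trans hβδ
      exact ⟨η, hη, fun _ => h⟩
    · exact ⟨0, omega1_pos, fun h => absurd h hξ⟩
  choose p hp hpβ using hpre
  obtain ⟨q, hq, hqβ⟩ : β ∈ collapse δ '' Iio omega1 := himage ▸ hβδ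
  refine ⟨closurePoints p ∩ Ioo q omega1,
    (isClub_closurePoints fun ξ _ => hp ξ).inter (isClub_Ioo hq), ?_⟩
  rintro α ⟨hαp, hqα, -⟩
  refine otp_lt_otp ?_ ⟨hβδ, q, hqα, hqβ⟩ (fun _ hx => hx.1)
    (bddAbove_Iio.mono inter_subset_left)
  rintro _ ⟨hζβ, ξ, hξ, rfl⟩
  exact ⟨hζβ.trans hβδ, p ξ, hαp.2 ξ hξ, hpβ ξ hζβ⟩

theorem canonical_iff {γ : Ordinal.{0}} {g : Ordinal.{0} → Ordinal.{0}} :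
    Canonical γ g ↔
      (∀ β < γ, ∀ g', Canonical β g' → LtOnClub g' g) ∧
       ∀ h : Ordinal.{0} → Ordinal.{0},
         (∀ β < γ, ∀ g', Canonical β g' → LtOnClub g' h) → BddOnClub g h := by
  rw [Canonical, WellFounded.fix_eq]

theorem Canonical.bddOnClub_canonFn {γ δ : Ordinal.{0}} {g : Ordinal.{0} → Ordinal.{0}}
    (hg : Canonical γ g) (hγδ : γ ≤ δ) (hδ : δ < omega2) : BddOnClub g (canonFn δ) := by
  induction γ using WellFoundedLT.induction generalizing g δ with
  | _ γ ih =>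
    refine (canonical_iff.1 hg).2 _ fun β hβ g' hg' => ?_
    have hβδ := hβ.trans_le hγδ
    exact (ih β hβ hg' le_rfl (hβδ.trans hδ)).trans_ltOnClub (canonFn_lt_canonFn hβδ hδ)

abbrev initSeg {β : Type*} (x : ℕ → β) (n : ℕ) : List β := List.ofFn fun i : Fin n => x i

theorem take_initSeg {β : Type*} (x : ℕ → β) (m k : ℕ) :
    (initSeg x m).take k = initSeg x (min k m) :=
  List.ext_getElem (by simp) fun i _ _ => by simp

theorem initSeg_prefix_initSeg {β : Type*} (x : ℕ → β) {m n : ℕ} (h : m ≤ n) :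
    initSeg x m <+: initSeg x n := by
  rw [List.prefix_iff_eq_take, List.length_ofFn, take_initSeg, min_eq_left h]

theorem getD_initSeg {β : Type*} (x : ℕ → β) (d : β) {n i : ℕ} (h : i < n) :
    (initSeg x n).getD i d = x i := by
  rw [List.getD_eq_getElem _ _ (by simpa using h), List.getElem_ofFn]

theorem exists_initSeg_prefix {β : Type*} [Inhabited β] (a : ℕ → List β)
    (ha : ∀ n, a n <+: a (n + 1)) (hlen : ∀ n, n ≤ (a n).length) :
    ∃ y : ℕ → β, ∀ n, initSeg y n <+: a n := by
  have hmono : ∀ m n, m ≤ n → a m <+: a n := fun m n hmn => by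
    induction n, hmn using Nat.le_induction with
    | base => exact List.prefix_refl _
    | succ n _ ih => exact ih.trans (ha n)
  refine ⟨fun i => (a (i + 1)).getD i default, fun n => ?_⟩
  rw [List.prefix_iff_eq_take]
  refine List.ext_getElem (by simp [hlen n]) fun i hi _ => ?_
  simp only [List.length_ofFn] at hi
  have hi' : i < (a (i + 1)).length := (hlen (i + 1)).trans_lt' (Nat.lt_succ_self i)
  simp only [List.getElem_ofFn, List.getElem_take, List.getD_eq_getElem _ _ hi']
  exact (hmono _ _ hi).getElem hi'

/-- The paper's `S_x`. -/
def sectionTree (S : Set (List ℕ × List ℕ)) (x : ℕ → ℕ) : Set (List ℕ) :=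
  {σ | (initSeg x σ.length, σ) ∈ S}

theorem IsTreeN.mem_sectionTree_of_prefix {S : Set (List ℕ × List ℕ)} (hS : IsTreeN S)
    {x : ℕ → ℕ} {σ τ : List ℕ} (hσ : σ ∈ sectionTree S x) (hτ : τ <+: σ) :
    τ ∈ sectionTree S x := by
  have h := (hS _ hσ).2 τ.length
  rwa [take_initSeg, min_eq_left hτ.length_le, ← List.prefix_iff_eq_take.1 hτ] at h

def sectionRel (S : Set (List ℕ × List ℕ)) (x : ℕ → ℕ) (σ τ : List ℕ) : Prop :=
  σ ∈ sectionTree S x ∧ τ <+: σ ∧ τ.length < σ.length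

theorem wellFounded_sectionRel {S : Set (List ℕ × List ℕ)} (hS : IsTreeN S) {x : ℕ → ℕ}
    (hx : x ∉ projN S) : WellFounded (sectionRel S x) := by
  refine wellFounded_iff_isEmpty_descending_chain.2 ⟨fun ⟨a, ha⟩ => hx ?_⟩
  have hlen : ∀ n, n ≤ (a n).length := fun n => by
    induction n with
    | zero => exact Nat.zero_le _
    | succ n ih => exact ih.trans_lt (ha n).2.2
  obtain ⟨y, hy⟩ := exists_initSeg_prefix a (fun n => (ha n).2.1) hlen
  refine ⟨y, fun n => ?_⟩
  have h := hS.mem_sectionTree_of_prefix (ha n).1 ((hy n).trans (ha n).2.1)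
  simpa [sectionTree] using h

theorem Acc.rank_lt_omega1 {α : Type} [Countable α] {r : α → α → Prop} {a : α}
    (h : Acc r a) : h.rank < omega1 := by
  induction h with
  | intro a _ ih =>
    rw [Acc.rank_eq]
    exact iSup_lt_omega1 fun b => isSuccLimit_omega1.succ_lt (ih b b.2)

open Classical in
/-- Junk value `0` when `S_x` is illfounded. -/
noncomputable def sectionHeight (S : Set (List ℕ × List ℕ)) (x : ℕ → ℕ) : Ordinal.{0} :=
  if h : WellFounded (sectionRel S x) then ⨆ σ, Order.succ (h.apply σ).rank else 0

theorem rank_lt_sectionHeight {S : Set (List ℕ × List ℕ)} {x : ℕ → ℕ}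
    (h : WellFounded (sectionRel S x)) (σ : List ℕ) :
    (h.apply σ).rank < sectionHeight S x := by
  rw [sectionHeight, dif_pos h]
  exact (Order.lt_succ _).trans_le (Ordinal.le_iSup (fun σ => Order.succ (h.apply σ).rank) σ)

theorem sectionHeight_lt_omega1 {S : Set (List ℕ × List ℕ)} (hS : IsTreeN S) {x : ℕ → ℕ}
    (hx : x ∉ projN S) : sectionHeight S x < omega1 := by
  rw [sectionHeight, dif_pos (wellFounded_sectionRel hS hx)]
  exact iSup_lt_omega1 fun σ => isSuccLimit_omega1.succ_lt (Acc.rank_lt_omega1 _)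

open Encodable Denumerable in
/-- Entry `encode σ` of the second coordinate labels the node `σ` of `S_x` by an ordinal below
`ω₁`, and `e` must turn the labels into a rank function of `S_x`. As `|τ| ≤ encode τ`, the
condition at `τ` only involves the part of `x` already listed. -/
def rankTree (S : Set (List ℕ × List ℕ)) (e : Ordinal.{0} → Ordinal.{0}) :
    Set (List ℕ × List Ordinal.{0}) :=
  {p | p.1.length = p.2.length ∧ (∀ o ∈ p.2, o < omega1) ∧
    ∀ σ τ : List ℕ, encode σ < p.1.length → encode τ < p.1.length →
      σ <+: τ → σ.length < τ.length → (p.1.take τ.length, τ) ∈ S →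
      e (p.2.getD (encode τ) 0) < e (p.2.getD (encode σ) 0)}

theorem isTreeO_rankTree (S : Set (List ℕ × List ℕ)) (e : Ordinal.{0} → Ordinal.{0}) :
    IsTreeO (rankTree S e) := by
  rintro ⟨s, t⟩ ⟨hlen, hlt, hdesc⟩
  refine ⟨hlen, fun n => ⟨by simp [hlen], fun o ho => hlt o (List.mem_of_mem_take ho), ?_⟩⟩
  intro σ τ hσ hτ hpre hστ hmem
  simp only [List.length_take, lt_min_iff] at hσ hτ
  have hgetD : ∀ k < n, (t.take n).getD k 0 = t.getD k 0 := fun k hk => by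
    simp [List.getD_eq_getElem?_getD, hk]
  rw [List.take_take, min_eq_left ((Encodable.length_le_encode τ).trans hτ.1.le)] at hmem
  rw [hgetD _ hτ.1, hgetD _ hσ.1]
  exact hdesc σ τ hσ.2 hτ.2 hpre hστ hmem

open Encodable in
theorem projO_rankTree_subset (S : Set (List ℕ × List ℕ)) (e : Ordinal.{0} → Ordinal.{0}) :
    projO (rankTree S e) ⊆ (projN S)ᶜ := by
  rintro x ⟨y, hy⟩ ⟨z, hz⟩
  -- along the branch `z`, the labels `e (y (encode (z ↾ k)))` would descend forever
  obtain ⟨k, hk⟩ := WellFounded.not_rel_apply_succ (r := (· < ·))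
    fun k => e (y (encode (initSeg z k)))
  apply hk
  set N := max (encode (initSeg z k)) (encode (initSeg z (k + 1))) + 1
  have hσ : encode (initSeg z k) < N := by omega
  have hτ : encode (initSeg z (k + 1)) < N := by omega
  have hkN : k + 1 ≤ N := by
    have := length_le_encode (initSeg z (k + 1))
    simp only [List.length_ofFn] at this
    omega
  have hmem : ((initSeg x N).take (initSeg z (k + 1)).length, initSeg z (k + 1)) ∈ S := by
    rw [List.length_ofFn, take_initSeg, min_eq_left hkN]
    exact hz (k + 1)
  have h := (hy N).2.2 (initSeg z k) (initSeg z (k + 1)) (by rwa [List.length_ofFn])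
    (by rwa [List.length_ofFn]) (initSeg_prefix_initSeg z k.le_succ) (by simp) hmem
  rwa [getD_initSeg _ _ hσ, getD_initSeg _ _ hτ] at h

open Encodable Denumerable in
theorem mem_projOBelow_rankTree {S : Set (List ℕ × List ℕ)} {x : ℕ → ℕ}
    (hwf : WellFounded (sectionRel S x)) {e : Ordinal.{0} → Ordinal.{0}} {α : Ordinal.{0}}
    (hα : α ≤ omega1) {s : Set Ordinal.{0}} (hse : s ⊆ e '' Iio α) (hs : BddAbove s)
    (h : sectionHeight S x ≤ otp s) : x ∈ projOBelow (rankTree S e) α := by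
  obtain ⟨j⟩ := nonempty_orderEmbedding_of_le_otp hs h
  -- label `σ` by a preimage under `e` of the image of its rank under `j`
  have hlabel : ∀ σ, ∃ ζ < α, e ζ = j ⟨_, rank_lt_sectionHeight hwf σ⟩ := fun σ =>
    hse (j _).2
  choose φ hφα hφ using hlabel
  set y : ℕ → Ordinal.{0} := fun i => φ (ofNat (List ℕ) i)
  refine ⟨y, fun i => hφα _, fun n => ⟨by simp, ?_, ?_⟩⟩
  · intro o ho
    obtain ⟨i, rfl⟩ := List.mem_ofFn.1 ho
    exact (hφα _).trans_le hα
  · intro σ τ hσ hτ hpre hστ hmem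
    change encode σ < (initSeg x n).length at hσ
    change encode τ < (initSeg x n).length at hτ
    change ((initSeg x n).take τ.length, τ) ∈ S at hmem
    change e ((initSeg y n).getD (encode τ) 0) < e ((initSeg y n).getD (encode σ) 0)
    rw [List.length_ofFn] at hσ hτ
    rw [getD_initSeg _ _ hσ, getD_initSeg _ _ hτ]
    simp only [y, ofNat_encode, hφ]
    have hτS : τ ∈ sectionTree S x := by
      rwa [take_initSeg, min_eq_left ((length_le_encode τ).trans hτ.le)] at hmem
    exact j.strictMono (Acc.rank_lt_of_rel (hwf.apply σ) ⟨hτS, hpre, hστ⟩)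

theorem stmt_10 (hB : Bounding) (S : Set (List ℕ × List ℕ)) (hS : IsTreeN S)
    (f : Ordinal.{0} → (ℕ → ℕ)) (hf : ∀ α, α < omega1 → f α ∉ projN S) :
    ∃ T : Set (List ℕ × List Ordinal.{0}), IsTreeO T ∧
      (∀ p ∈ T, ∀ o ∈ p.2, o < omega1) ∧
      projO T = {x : ℕ → ℕ | x ∉ projN S} ∧
      ∃ C, IsClub C ∧ ∀ α ∈ C, f α ∈ projOBelow T α := by
  obtain ⟨γ, hγ, g, hg, hfg⟩ :=
    hB (fun α => sectionHeight S (f α)) fun α hα => sectionHeight_lt_omega1 hS (hf α hα)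
  -- enlarging `γ` to `δ ≥ ω₁` makes `T ↾ (ω × ω₁)` project onto all of `ω^ω \ p[S]`
  set δ := max γ omega1
  have hδ : δ < omega2 := max_lt hγ omega1_lt_omega2
  have hmem : ∀ x ∉ projN S, ∀ α ≤ omega1, sectionHeight S x ≤ canonFn δ α →
      x ∈ projOBelow (rankTree S (collapse δ)) α := fun x hx _ hα h =>
    mem_projOBelow_rankTree (wellFounded_sectionRel hS hx) hα inter_subset_right
      (bddAbove_Iio.mono inter_subset_left) h
  refine ⟨rankTree S (collapse δ), isTreeO_rankTree S _, fun p hp => hp.2.1,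
    Subset.antisymm (projO_rankTree_subset S _) fun x hx => ?_, ?_⟩
  · obtain ⟨y, -, hy⟩ := hmem x hx omega1 le_rfl <| by
      rw [canonFn_omega1 (omega1_pos.trans_le (le_max_right _ _)) hδ]
      exact (sectionHeight_lt_omega1 hS hx).le.trans (le_max_right _ _)
    exact ⟨y, hy⟩
  · obtain ⟨C, hC, hle⟩ := hfg.trans (hg.bddOnClub_canonFn (le_max_left _ _) hδ)
    exact ⟨C, hC, fun α hα => hmem _ (hf α (hC.1 hα)) α (hC.1 hα).le (hle α hα)⟩

end P746
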